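/- arXiv:2304.01462 — 2 statements merged into one kernel-verified Lean document; each statement's English description precedes it below -/
import Mathlib

section
/- For all natural numbers n ≥ 2 and s ≥ 1, the value s/(ns+1) lies in the n-th maximum loneliness spectrum; i.e., there exist nonzero integers v1,...,vn with ML(v1,...,vn) = s/(ns+1). -/
/-!
Take the speeds `1, 2, …, n - 1, n s` and `N = n s + 1`. At time `s / N` the products
`k s` (`k < n`) and `n s · s ≡ -s` all lie at distance at least `s` from `N ℤ`, which gives the
lower bound. For the upper bound, suppose `‖k t‖ > s / N` for every `k < n`. Visit the points
`j t` (`0 ≤ j ≤ n`) in their circular order on `ℝ / ℤ`: the `n + 1` arcs have total length `1`,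
the arc from `i t` to `j t` is at least `‖(j - i) t‖`, and since `n + 1 ≥ 3` at most one arc joins
`0` and `n t`. If `‖n t‖ > 1 / N`, every arc would exceed `1 / N` and all but one would exceed
`s / N`, for a total above `(1 + n s) / N = 1`. So `‖n t‖ ≤ 1 / N`, and `‖n s t‖ ≤ s ‖n t‖ ≤ s / N`.
-/

/-- Distance from a real number to the nearest integer. -/
noncomputable def distToInt (x : ℝ) : ℝ := ⨅ m : ℤ, |x - m|

/-- Maximum loneliness of a tuple of speeds. -/
noncomputable def ML {n : ℕ} (v : Fin n → ℤ) : ℝ :=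
  ⨆ t : ℝ, ⨅ i : Fin n, distToInt (t * v i)

theorem distToInt_eq_abs_sub_round (x : ℝ) : distToInt x = |x - round x| :=
  le_antisymm (ciInf_le ⟨0, by rintro _ ⟨m, rfl⟩; positivity⟩ (round x))
    (le_ciInf fun m => round_le x m)

theorem distToInt_le (x : ℝ) (m : ℤ) : distToInt x ≤ |x - m| := by
  rw [distToInt_eq_abs_sub_round]
  exact round_le x m

theorem le_distToInt {x c : ℝ} (h : ∀ m : ℤ, c ≤ |x - m|) : c ≤ distToInt x :=
  le_ciInf h

theorem distToInt_neg (x : ℝ) : distToInt (-x) = distToInt x := by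
  rw [distToInt, ← (Equiv.neg ℤ).iInf_comp]
  congr 1 with m
  rw [Equiv.neg_apply, Int.cast_neg, ← abs_neg]
  ring_nf

theorem distToInt_add_intCast (x : ℝ) (m : ℤ) : distToInt (x + m) = distToInt x := by
  rw [distToInt_eq_abs_sub_round, distToInt_eq_abs_sub_round, round_add_intCast, Int.cast_add]
  ring_nf

theorem distToInt_natCast_mul_le (k : ℕ) (x : ℝ) : distToInt (k * x) ≤ k * distToInt x := by
  calc distToInt (k * x) ≤ |k * x - (k * round x : ℤ)| := distToInt_le _ _
    _ = |(k : ℝ)| * |x - round x| := by rw [← abs_mul]; push_cast; ring_nf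
    _ = k * distToInt x := by rw [Nat.abs_cast, distToInt_eq_abs_sub_round]

theorem distToInt_natAbs_mul (d : ℤ) (x : ℝ) : distToInt (d.natAbs * x) = distToInt (d * x) := by
  rw [Nat.cast_natAbs, Int.cast_abs]
  rcases abs_choice (d : ℝ) with h | h <;> rw [h]
  rw [neg_mul, distToInt_neg]

theorem div_le_distToInt_intCast_div {a c N : ℤ} (hN : 0 < N) (ha : a ≤ c) (hc : c ≤ N - a) :
    (a : ℝ) / N ≤ distToInt (c / N) := by
  refine le_distToInt fun m => ?_
  have hN' : (0 : ℝ) < N := by exact_mod_cast hN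
  have hdist : a ≤ |c - m * N| := by
    rcases le_or_gt m 0 with hm | hm
    · nlinarith [le_abs_self (c - m * N)]
    · nlinarith [neg_le_abs (c - m * N)]
  rw [show (c : ℝ) / N - m = ((c - m * N : ℤ) : ℝ) / N by push_cast; field_simp, abs_div,
    abs_of_pos hN']
  gcongr
  exact_mod_cast hdist

theorem exists_perm_sum_distToInt_sub_le_one {m : ℕ} (x : Fin (m + 1) → ℝ) :
    ∃ σ : Equiv.Perm (Fin (m + 1)), ∑ i, distToInt (x (σ (i + 1)) - x (σ i)) ≤ 1 := by
  set σ := Tuple.sort fun j => Int.fract (x j)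
  have hmono : Monotone fun j => Int.fract (x (σ j)) :=
    Tuple.monotone_sort fun j => Int.fract (x j)
  -- the arc from the `i`-th to the `(i+1)`-th smallest fractional part, cyclically
  set wrap : Fin (m + 1) → ℤ := fun i => if i = Fin.last m then 1 else 0
  set gap : Fin (m + 1) → ℝ := fun i =>
    Int.fract (x (σ (i + 1))) - Int.fract (x (σ i)) + wrap i
  have hgap_nonneg : ∀ i, 0 ≤ gap i := by
    intro i
    by_cases hi : i = Fin.last m
    · simp only [gap, wrap, if_pos hi, Int.cast_one]
      linarith [Int.fract_nonneg (x (σ (i + 1))), Int.fract_lt_one (x (σ i))]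
    · have : i ≤ i + 1 := (Fin.lt_add_one_iff.2 (Fin.lt_last_iff_ne_last.2 hi)).le
      simp only [gap, wrap, if_neg hi, Int.cast_zero]
      linarith [hmono this]
  have hle_gap : ∀ i, distToInt (x (σ (i + 1)) - x (σ i)) ≤ gap i := fun i =>
    calc distToInt (x (σ (i + 1)) - x (σ i))
        ≤ |x (σ (i + 1)) - x (σ i) - (⌊x (σ (i + 1))⌋ - ⌊x (σ i)⌋ - wrap i : ℤ)| :=
          distToInt_le _ _
      _ = gap i := by
        rw [← abs_of_nonneg (hgap_nonneg i)]
        simp only [gap, Int.fract]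
        push_cast
        ring_nf
  have hsum : ∑ i, gap i = 1 := by
    simp only [gap, Finset.sum_add_distrib, Finset.sum_sub_distrib, wrap]
    have hshift : ∑ i, Int.fract (x (σ (i + 1))) = ∑ i, Int.fract (x (σ i)) :=
      Equiv.sum_comp (Equiv.addRight 1) fun j => Int.fract (x (σ j))
    simp [hshift]
  exact ⟨σ, (Finset.sum_le_sum fun i _ => hle_gap i).trans hsum.le⟩

theorem Fin.add_one_ne_self {n : ℕ} (hn : 1 ≤ n) (i : Fin (n + 1)) : i + 1 ≠ i := by
  rw [Ne, add_eq_left, Fin.ext_iff, Fin.val_one', Nat.mod_eq_of_lt (by omega)]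
  exact one_ne_zero

theorem Fin.add_one_add_one_ne_self {n : ℕ} (hn : 2 ≤ n) (i : Fin (n + 1)) : i + 1 + 1 ≠ i := by
  rw [add_assoc, Ne, add_eq_left, Fin.ext_iff, Fin.val_add, Fin.val_one',
    Nat.mod_eq_of_lt (by omega : 1 < n + 1), Fin.val_zero, Nat.mod_eq_of_lt (by omega : 2 < n + 1)]
  omega

theorem Equiv.Perm.eq_of_natAbs_sub_eq {n : ℕ} (hn : 2 ≤ n) (σ : Equiv.Perm (Fin (n + 1)))
    {i j : Fin (n + 1)} (hi : ((σ (i + 1) : ℤ) - σ i).natAbs = n)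
    (hj : ((σ (j + 1) : ℤ) - σ j).natAbs = n) : i = j := by
  have hends : ∀ k, ((σ (k + 1) : ℤ) - σ k).natAbs = n →
      (σ k = 0 ∧ σ (k + 1) = Fin.last n) ∨ (σ k = Fin.last n ∧ σ (k + 1) = 0) := by
    intro k hk
    have := (σ k).isLt
    have := (σ (k + 1)).isLt
    simp only [Fin.ext_iff, Fin.val_zero, Fin.val_last]
    omega
  have hcycle : i + 1 = j → j + 1 = i → False := fun h₁ h₂ =>
    Fin.add_one_add_one_ne_self hn i (by rw [h₁, h₂])
  rcases hends i hi with ⟨hi₀, hi₁⟩ | ⟨hi₀, hi₁⟩ <;>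
    rcases hends j hj with ⟨hj₀, hj₁⟩ | ⟨hj₀, hj₁⟩ <;>
    first
    | exact add_right_cancel (σ.injective (hi₁.trans hj₁.symm))
    | exact (hcycle (σ.injective (hi₁.trans hj₀.symm)) (σ.injective (hj₁.trans hi₀.symm))).elim

theorem distToInt_mul_le_one_sub {n : ℕ} (hn : 2 ≤ n) {a t : ℝ} (ha : 1 ≤ (n + 1) * a)
    (h : ∀ k : ℕ, 0 < k → k < n → a < distToInt (k * t)) : distToInt (n * t) ≤ 1 - n * a := by
  by_contra! hlt
  obtain ⟨σ, hσ⟩ := exists_perm_sum_distToInt_sub_le_one fun j : Fin (n + 1) => (j : ℝ) * t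
  set d : Fin (n + 1) → ℕ := fun i => ((σ (i + 1) : ℤ) - σ i).natAbs with hd
  have hterm : ∀ i, distToInt ((σ (i + 1) : ℝ) * t - σ i * t) = distToInt (d i * t) := by
    intro i
    rw [hd, distToInt_natAbs_mul]
    push_cast
    ring_nf
  have hd_pos : ∀ i, 0 < d i := fun i => by
    have := σ.injective.ne (Fin.add_one_ne_self (by omega) i)
    rw [Ne, Fin.ext_iff] at this
    show 0 < ((σ (i + 1) : ℤ) - σ i).natAbs
    omega
  have hd_le : ∀ i, d i ≤ n := fun i => by
    have := (σ i).isLt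
    have := (σ (i + 1)).isLt
    show ((σ (i + 1) : ℤ) - σ i).natAbs ≤ n
    omega
  obtain ⟨i₀, hi₀⟩ : ∃ i₀, ∀ i ≠ i₀, d i < n := by
    by_cases hlong : ∃ i₀, d i₀ = n
    · obtain ⟨i₀, hi₀⟩ := hlong
      exact ⟨i₀, fun i hi => (hd_le i).lt_of_ne fun h => hi (σ.eq_of_natAbs_sub_eq hn h hi₀)⟩
    · push Not at hlong
      exact ⟨0, fun i _ => (hd_le i).lt_of_ne (hlong i)⟩
  have hgt : ∀ i, 1 - n * a < distToInt (d i * t) := by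
    intro i
    rcases (hd_le i).lt_or_eq with hi | hi
    · linarith [h _ (hd_pos i) hi]
    · rwa [hi]
  have hrest : n * a < ∑ i ∈ Finset.univ.erase i₀, distToInt (d i * t) := by
    have hcard : (Finset.univ.erase i₀).card = n := by simp
    calc (n : ℝ) * a = ∑ i ∈ Finset.univ.erase i₀, a := by simp [hcard]
      _ < _ := Finset.sum_lt_sum_of_nonempty (Finset.card_pos.1 (by omega))
        fun i hi => h _ (hd_pos i) (hi₀ i (Finset.ne_of_mem_erase hi))
  have := Finset.add_sum_erase Finset.univ (fun i => distToInt (d i * t)) (Finset.mem_univ i₀)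
  simp only [hterm] at hσ
  linarith [hgt i₀]

theorem ML_eq_of_forall_le {n : ℕ} {v : Fin n → ℤ} {c : ℝ}
    (hle : ∀ t, ⨅ i, distToInt (t * v i) ≤ c) {t₀ : ℝ} (h₀ : c ≤ ⨅ i, distToInt (t₀ * v i)) :
    ML v = c :=
  le_antisymm (ciSup_le hle) (le_ciSup_of_le ⟨c, by rintro _ ⟨t, rfl⟩; exact hle t⟩ t₀ h₀)

def rangeWithLast (n : ℕ) (L : ℤ) : Fin n → ℤ :=
  fun i => if (i : ℕ) + 1 < n then (i : ℤ) + 1 else L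

theorem rangeWithLast_ne_zero {n : ℕ} {L : ℤ} (hL : L ≠ 0) (i : Fin n) :
    rangeWithLast n L i ≠ 0 := by
  unfold rangeWithLast
  split_ifs
  · omega
  · exact hL

theorem rangeWithLast_pred {n : ℕ} (L : ℤ) {k : ℕ} (hk₀ : 0 < k) (hkn : k < n) :
    rangeWithLast n L ⟨k - 1, by omega⟩ = k := by
  simp only [rangeWithLast, if_pos (show k - 1 + 1 < n by omega)]
  omega

theorem rangeWithLast_last {n : ℕ} (L : ℤ) (hn : 0 < n) :
    rangeWithLast n L ⟨n - 1, by omega⟩ = L := by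
  simp only [rangeWithLast, if_neg (show ¬ n - 1 + 1 < n by omega)]

theorem iInf_distToInt_mul_rangeWithLast_le {n s : ℕ} (hn : 2 ≤ n) (hs : 1 ≤ s) (t : ℝ) :
    ⨅ i, distToInt (t * rangeWithLast n (n * s) i) ≤ s / (n * s + 1) := by
  have hN : (0 : ℝ) < n * s + 1 := by positivity
  have hbdd := (Set.finite_range fun i => distToInt (t * rangeWithLast n (n * s) i)).bddBelow
  by_cases hshort : ∃ k : ℕ, 0 < k ∧ k < n ∧ distToInt (k * t) ≤ s / (n * s + 1)
  · obtain ⟨k, hk₀, hkn, hk⟩ := hshort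
    refine (ciInf_le hbdd ⟨k - 1, by omega⟩).trans ?_
    rwa [rangeWithLast_pred _ hk₀ hkn, Int.cast_natCast, mul_comm]
  · push Not at hshort
    have ha : 1 ≤ (n + 1) * (s / (n * s + 1) : ℝ) := by
      rw [← mul_div_assoc, le_div_iff₀ hN]
      have : (1 : ℝ) ≤ s := by exact_mod_cast hs
      linarith
    have hnt := distToInt_mul_le_one_sub hn ha hshort
    refine (ciInf_le hbdd ⟨n - 1, by omega⟩).trans ?_
    rw [rangeWithLast_last _ (by omega)]
    calc distToInt (t * ((n * s : ℤ) : ℝ)) = distToInt (s * (n * t)) := by push_cast; ring_nf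
      _ ≤ s * distToInt (n * t) := distToInt_natCast_mul_le _ _
      _ ≤ s * (1 - n * (s / (n * s + 1))) := by gcongr
      _ = s / (n * s + 1) := by field_simp; ring

theorem le_iInf_distToInt_mul_rangeWithLast {n s : ℕ} (hn : 2 ≤ n) :
    (s / (n * s + 1) : ℝ) ≤ ⨅ i, distToInt (s / (n * s + 1) * rangeWithLast n (n * s) i) := by
  have : Nonempty (Fin n) := ⟨⟨0, by omega⟩⟩
  refine le_ciInf fun i => ?_
  have hcast : (s / (n * s + 1) : ℝ) = ((s : ℤ) : ℝ) / ((n * s + 1 : ℤ) : ℝ) := by push_cast; rfl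
  unfold rangeWithLast
  split_ifs with hi
  · calc (s / (n * s + 1) : ℝ)
        ≤ distToInt (((s * (i + 1) : ℤ) : ℝ) / ((n * s + 1 : ℤ) : ℝ)) :=
          hcast ▸ div_le_distToInt_intCast_div (by positivity) (by nlinarith) (by nlinarith)
      _ = _ := by congr 1; push_cast; ring
  · calc (s / (n * s + 1) : ℝ)
        ≤ distToInt (((n * s + 1 - s : ℤ) : ℝ) / ((n * s + 1 : ℤ) : ℝ)) :=
          hcast ▸ div_le_distToInt_intCast_div (by positivity) (by nlinarith) (by nlinarith)
      _ = distToInt (((n * s + 1 - s : ℤ) : ℝ) / ((n * s + 1 : ℤ) : ℝ) + ((s - 1 : ℤ) : ℝ)) :=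
          (distToInt_add_intCast _ _).symm
      _ = _ := by congr 1; push_cast; field_simp; ring

theorem spectrum_contains_s_over_ns_plus_one (n s : ℕ) (hn : 2 ≤ n) (hs : 1 ≤ s) :
    ∃ v : Fin n → ℤ, (∀ i, v i ≠ 0) ∧ ML v = (s : ℝ) / (n * s + 1) :=
  ⟨rangeWithLast n (n * s), rangeWithLast_ne_zero (by positivity),
    ML_eq_of_forall_le (iInf_distToInt_mul_rangeWithLast_le hn hs)
      (le_iInf_distToInt_mul_rangeWithLast hn)⟩
end

section
/- Let Δ be a subgroup of (ℝ/ℤ)ⁿ that is the direct sum of a k-dimensional subtorus T and a finite subgroup H, and suppose vol_k(T)·|H| ≤ V for some V > 0. Then vol_k(T) ≤ V and |H| ≤ V. Moreover, for fixed n, k, V, there are only finitely many such subgroups Δ. -/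
/-!
Both factors of the volume are at least `1`: `|H| ≥ 1`, and `vol_k(T)² = det (B Bᵀ)` for the
integer matrix `B` with rows `b i`, a nonnegative integer that is nonzero because the rows are
independent.

For finiteness, every element of `H` is killed by `⌊V⌋!`, so `H` is one of the finitely many
subsets of the `⌊V⌋!`-torsion of the torus. The subtorus is the image of the row space of `B`,
which is the eigenspace `{y | y ᵥ* P = d • y}` of the integer matrix `P = Bᵀ adj(B Bᵀ) B`,
`d = det (B Bᵀ) ≤ V²`. Since `P` is symmetric with `P² = d P`, its entries are bounded by `d`,
so only finitely many row spaces occur.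
-/

/-- The covolume (k-dimensional volume of the corresponding subtorus) of the lattice
spanned by the integer vectors `b 0, ..., b (k-1)`: the square root of the Gram
determinant. -/
noncomputable def latticeCovol {n k : ℕ} (b : Fin k → (Fin n → ℤ)) : ℝ :=
  Real.sqrt (Matrix.det (Matrix.of fun i j : Fin k => ((∑ l, b i l * b j l : ℤ) : ℝ)))

/-- The k-dimensional subtorus of (ℝ/ℤ)ⁿ spanned by the integer vectors
`b 0, ..., b (k-1)`, as a subset of the torus. -/
noncomputable def subtorusSet {n k : ℕ} (b : Fin k → (Fin n → ℤ)) :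
    Set (Fin n → AddCircle (1 : ℝ)) :=
  {x | ∃ t : Fin k → ℝ, ∀ i, x i = ((∑ j, t j * (b j i : ℝ) : ℝ) : AddCircle (1 : ℝ))}

open Matrix

section OrderedRing
variable {R : Type*} [CommRing R] [LinearOrder R] [IsStrictOrderedRing R]
  {m n : Type*} [Fintype m] [DecidableEq m] [Fintype n]

theorem abs_apply_le_of_mul_self_eq_smul {Q : Matrix n n R} {d : R} (hQ : Qᵀ = Q)
    (hQQ : Q * Q = d • Q) (hd : 0 < d) (i j : n) : |Q i j| ≤ d := by
  have hdiag : ∑ l, Q i l ^ 2 = d * Q i i := by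
    have := congrFun (congrFun hQQ i) i
    simp only [mul_apply, Matrix.smul_apply, smul_eq_mul] at this
    rw [← this]
    refine Finset.sum_congr rfl fun l _ => ?_
    rw [sq, ← congrFun (congrFun hQ i) l, transpose_apply]
  have hle : ∀ l, Q i l ^ 2 ≤ d * Q i i := fun l =>
    hdiag ▸ Finset.single_le_sum (fun l _ => sq_nonneg (Q i l)) (Finset.mem_univ l)
  have hii : Q i i ≤ d := by nlinarith [hle i]
  exact abs_le_of_sq_le_sq (by nlinarith [hle j]) hd.le

theorem det_mul_transpose_ne_zero {B : Matrix m n R} (hB : LinearIndependent R B.row) :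
    (B * Bᵀ).det ≠ 0 := by
  rw [← Matrix.vecMul_injective_iff] at hB
  intro h
  obtain ⟨v, hv, hBv⟩ := exists_mulVec_eq_zero_iff.mpr h
  have : v ᵥ* B = 0 := by
    rw [← dotProduct_self_eq_zero, ← dotProduct_mulVec, ← mulVec_transpose, mulVec_mulVec, hBv,
      dotProduct_zero]
  exact hv (hB (this.trans (zero_vecMul B).symm))

end OrderedRing

section ScaledProjection
variable {m n : Type*} [Fintype m] [DecidableEq m] [Fintype n]

/-- `(B * Bᵀ).det` times the orthogonal projection onto the row space of `B`, which has entries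
in the base ring since `(B * Bᵀ)⁻¹ = (B * Bᵀ).det⁻¹ • adjugate (B * Bᵀ)`. -/
def scaledRowProjection {R : Type*} [CommRing R] (B : Matrix m n R) : Matrix n n R :=
  Bᵀ * adjugate (B * Bᵀ) * B

variable {R : Type*} [CommRing R]

theorem scaledRowProjection_transpose (B : Matrix m n R) :
    (scaledRowProjection B)ᵀ = scaledRowProjection B := by
  simp only [scaledRowProjection, transpose_mul, transpose_transpose, adjugate_transpose,
    Matrix.mul_assoc]

theorem mul_scaledRowProjection (B : Matrix m n R) :
    B * scaledRowProjection B = (B * Bᵀ).det • B := by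
  rw [scaledRowProjection, ← Matrix.mul_assoc, ← Matrix.mul_assoc, mul_adjugate, smul_mul,
    Matrix.one_mul]

theorem scaledRowProjection_mul_self (B : Matrix m n R) :
    scaledRowProjection B * scaledRowProjection B = (B * Bᵀ).det • scaledRowProjection B := by
  nth_rewrite 1 [scaledRowProjection]
  rw [Matrix.mul_assoc, mul_scaledRowProjection, Matrix.mul_smul, scaledRowProjection]

theorem det_map_mul_transpose {S : Type*} [CommRing S] (f : R →+* S) (B : Matrix m n R) :
    (B.map f * (B.map f)ᵀ).det = f (B * Bᵀ).det := by
  rw [RingHom.map_det, RingHom.mapMatrix_apply, Matrix.map_mul, transpose_map]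

theorem map_scaledRowProjection {S : Type*} [CommRing S] (f : R →+* S) (B : Matrix m n R) :
    (scaledRowProjection B).map f = scaledRowProjection (B.map f) := by
  have hadj : (adjugate (B * Bᵀ)).map f = adjugate (B.map f * (B.map f)ᵀ) := by
    rw [← transpose_map, ← Matrix.map_mul]
    exact f.map_adjugate _
  rw [scaledRowProjection, scaledRowProjection, Matrix.map_mul, Matrix.map_mul, hadj,
    transpose_map]

theorem range_vecMul_eq {K : Type*} [Field K] {B : Matrix m n K} (hB : (B * Bᵀ).det ≠ 0) :
    Set.range (· ᵥ* B) = {y | y ᵥ* scaledRowProjection B = (B * Bᵀ).det • y} := by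
  ext y
  constructor
  · rintro ⟨t, rfl⟩
    simp only [Set.mem_ofPred_eq, vecMul_vecMul, mul_scaledRowProjection, vecMul_smul]
  · intro hy
    refine ⟨(B * Bᵀ).det⁻¹ • (y ᵥ* Bᵀ ᵥ* adjugate (B * Bᵀ)), ?_⟩
    change ((B * Bᵀ).det⁻¹ • _) ᵥ* B = y
    rw [smul_vecMul, vecMul_vecMul, vecMul_vecMul, ← Matrix.mul_assoc]
    exact (congrArg _ hy).trans (inv_smul_smul₀ hB y)

end ScaledProjection

theorem finite_setOf_range_vecMul_map_intCast {m n : Type*} [Fintype m] [DecidableEq m]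
    [Fintype n] (K : Type*) [Field K] [CharZero K] (D : ℤ) :
    {W : Set (n → K) | ∃ B : Matrix m n ℤ, 0 < (B * Bᵀ).det ∧ (B * Bᵀ).det ≤ D ∧
      W = Set.range (· ᵥ* B.map (Int.cast : ℤ → K))}.Finite := by
  have hdata : (Set.Icc 1 D ×ˢ {Q : Matrix n n ℤ | ∀ i j, Q i j ∈ Set.Icc (-D) D}).Finite :=
    (Set.finite_Icc 1 D).prod (Set.Finite.pi' fun _ => Set.Finite.pi' fun _ => Set.finite_Icc _ _)
  refine (hdata.image fun p => {y | y ᵥ* p.2.map (Int.castRingHom K) = (p.1 : K) • y}).subset ?_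
  rintro W ⟨B, hpos, hle, rfl⟩
  refine ⟨((B * Bᵀ).det, scaledRowProjection B), ⟨⟨hpos, hle⟩, fun i j => ?_⟩, ?_⟩
  · exact abs_le.mp ((abs_apply_le_of_mul_self_eq_smul (scaledRowProjection_transpose B)
      (scaledRowProjection_mul_self B) hpos i j).trans hle)
  · have hdet := det_map_mul_transpose (Int.castRingHom K) B
    change _ = Set.range (· ᵥ* B.map (Int.castRingHom K))
    rw [range_vecMul_eq (hdet ▸ Int.cast_ne_zero.mpr hpos.ne'), hdet,
      ← map_scaledRowProjection]
    rfl

theorem det_mul_transpose_nonneg {m n : Type*} [Fintype m] [DecidableEq m] [Fintype n]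
    (B : Matrix m n ℤ) : 0 ≤ (B * Bᵀ).det := by
  have h := (posSemidef_self_mul_conjTranspose (B.map (Int.castRingHom ℝ))).det_nonneg
  rwa [conjTranspose_eq_transpose_of_trivial, det_map_mul_transpose, eq_intCast,
    Int.cast_nonneg_iff] at h

theorem det_mul_transpose_pos {m n : Type*} [Fintype m] [DecidableEq m] [Fintype n]
    {B : Matrix m n ℤ} (hB : LinearIndependent ℤ B.row) : 0 < (B * Bᵀ).det :=
  (det_mul_transpose_nonneg B).lt_of_ne' (det_mul_transpose_ne_zero hB)

section Lattice
variable {n k : ℕ}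

theorem latticeCovol_eq_sqrt_det (b : Fin k → Fin n → ℤ) :
    latticeCovol b = √((of b * (of b)ᵀ).det : ℝ) := by
  rw [latticeCovol, ← eq_intCast (Int.castRingHom ℝ), RingHom.map_det]
  rfl

theorem sq_latticeCovol (b : Fin k → Fin n → ℤ) :
    latticeCovol b ^ 2 = (of b * (of b)ᵀ).det := by
  rw [latticeCovol_eq_sqrt_det, Real.sq_sqrt (Int.cast_nonneg (det_mul_transpose_nonneg _))]

theorem one_le_latticeCovol {b : Fin k → Fin n → ℤ} (hb : LinearIndependent ℤ b) :
    1 ≤ latticeCovol b := by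
  rw [latticeCovol_eq_sqrt_det, Real.one_le_sqrt]
  exact_mod_cast det_mul_transpose_pos (B := of b) hb

theorem subtorusSet_eq_image (b : Fin k → Fin n → ℤ) :
    subtorusSet b = (fun (y : Fin n → ℝ) i => (y i : AddCircle (1 : ℝ))) ''
      Set.range (· ᵥ* (of b).map (Int.cast : ℤ → ℝ)) := by
  ext x
  constructor
  · rintro ⟨t, ht⟩
    exact ⟨t ᵥ* _, ⟨t, rfl⟩, funext fun i => (ht i).symm⟩
  · rintro ⟨_, ⟨t, rfl⟩, rfl⟩
    exact ⟨t, fun i => rfl⟩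

end Lattice

theorem AddSubgroup.factorial_nsmul_eq_zero_of_natCard_le {G : Type*} [AddGroup G] {H : AddSubgroup G}
    [Finite H] {N : ℕ} (hN : Nat.card H ≤ N) {x : G} (hx : x ∈ H) : N.factorial • x = 0 :=
  addOrderOf_dvd_iff_nsmul_eq_zero.mp <| (H.addOrderOf_dvd_natCard hx).trans <|
    Nat.dvd_factorial Nat.card_pos hN

theorem AddCircle.finite_setOf_nsmul_eq_zero_pi {ι : Type*} [Finite ι] (p : ℝ) {N : ℕ}
    (hN : 0 < N) : {x : ι → AddCircle p | N • x = 0}.Finite :=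
  (Set.Finite.pi' fun _ => AddCircle.finite_torsion p hN).subset fun _ hx i => congrFun hx i

theorem finitely_many_small_subgroups_general (n k : ℕ) (V : ℝ) :
    -- Part 1: if vol_k(T) · |H| ≤ V then vol_k(T) ≤ V and |H| ≤ V.
    (∀ (b : Fin k → (Fin n → ℤ)) (H : AddSubgroup (Fin n → AddCircle (1 : ℝ))),
      LinearIndependent ℤ b →
      (∀ (x : Fin n → ℤ) (m : ℤ), m ≠ 0 →
        m • x ∈ Submodule.span ℤ (Set.range b) → x ∈ Submodule.span ℤ (Set.range b)) →
      ∀ hH : (H : Set (Fin n → AddCircle (1 : ℝ))).Finite,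
        latticeCovol b * hH.toFinset.card ≤ V →
          latticeCovol b ≤ V ∧ (hH.toFinset.card : ℝ) ≤ V) ∧
    -- Part 2: there are only finitely many such subgroups Δ = T ⊕ H of volume at most V.
    {Δ : AddSubgroup (Fin n → AddCircle (1 : ℝ)) |
      ∃ (b : Fin k → (Fin n → ℤ)) (H : AddSubgroup (Fin n → AddCircle (1 : ℝ))),
        LinearIndependent ℤ b ∧
        (∀ (x : Fin n → ℤ) (m : ℤ), m ≠ 0 →
          m • x ∈ Submodule.span ℤ (Set.range b) → x ∈ Submodule.span ℤ (Set.range b)) ∧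
        ∃ hH : (H : Set (Fin n → AddCircle (1 : ℝ))).Finite,
          (Δ : Set (Fin n → AddCircle (1 : ℝ)))
              = {x | ∃ a ∈ subtorusSet b, ∃ h ∈ H, x = a + h} ∧
          subtorusSet b ∩ (H : Set (Fin n → AddCircle (1 : ℝ))) = {0} ∧
          latticeCovol b * hH.toFinset.card ≤ V}.Finite := by
  have volume_bounds (b : Fin k → Fin n → ℤ) (H : AddSubgroup (Fin n → AddCircle (1 : ℝ)))
      (hb : LinearIndependent ℤ b) (hH : (H : Set (Fin n → AddCircle (1 : ℝ))).Finite)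
      (hle : latticeCovol b * hH.toFinset.card ≤ V) :
      latticeCovol b ≤ V ∧ (hH.toFinset.card : ℝ) ≤ V := by
    have hcovol := one_le_latticeCovol hb
    have hcard : (1 : ℝ) ≤ hH.toFinset.card := by
      exact_mod_cast hH.toFinset.card_pos.mpr ⟨0, by simp⟩
    constructor <;> nlinarith
  refine ⟨fun b H hb _ => volume_bounds b H hb, ?_⟩
  have hspaces := finite_setOf_range_vecMul_map_intCast (m := Fin k) (n := Fin n) ℝ ⌊V ^ 2⌋
  have htorsion := (AddCircle.finite_setOf_nsmul_eq_zero_pi (ι := Fin n) 1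
    (Nat.factorial_pos ⌊V⌋₊)).finite_subsets
  refine (((hspaces.prod htorsion).image fun p =>
      {x | ∃ a ∈ (fun (y : Fin n → ℝ) i => (y i : AddCircle (1 : ℝ))) '' p.1, ∃ h ∈ p.2, x = a + h}
      ).preimage SetLike.coe_injective.injOn).subset ?_
  rintro Δ ⟨b, H, hb, -, hH, hΔ, -, hle⟩
  obtain ⟨hcovol, hcard⟩ := volume_bounds b H hb hH hle
  refine ⟨(_, H), ⟨⟨of b, det_mul_transpose_pos hb, ?_, rfl⟩, fun x hx => ?_⟩, ?_⟩
  · rw [Int.le_floor, ← sq_latticeCovol]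
    exact pow_le_pow_left₀ (zero_le_one.trans (one_le_latticeCovol hb)) hcovol 2
  · have : Finite H := hH.to_subtype
    refine AddSubgroup.factorial_nsmul_eq_zero_of_natCard_le (Nat.le_floor ?_) hx
    rwa [← SetLike.coe_sort_coe, Nat.card_coe_set_eq, Set.ncard_eq_toFinset_card _ hH]
  · rw [hΔ, subtorusSet_eq_image]
    rfl

theorem finitely_many_small_subgroups (n k : ℕ) (hk : k ≤ n) (V : ℝ) (hV : 0 < V) :
    -- Part 1: if vol_k(T) · |H| ≤ V then vol_k(T) ≤ V and |H| ≤ V.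
    (∀ (b : Fin k → (Fin n → ℤ)) (H : AddSubgroup (Fin n → AddCircle (1 : ℝ))),
      LinearIndependent ℤ b →
      (∀ (x : Fin n → ℤ) (m : ℤ), m ≠ 0 →
        m • x ∈ Submodule.span ℤ (Set.range b) → x ∈ Submodule.span ℤ (Set.range b)) →
      ∀ hH : (H : Set (Fin n → AddCircle (1 : ℝ))).Finite,
        latticeCovol b * hH.toFinset.card ≤ V →
          latticeCovol b ≤ V ∧ (hH.toFinset.card : ℝ) ≤ V) ∧
    -- Part 2: there are only finitely many such subgroups Δ = T ⊕ H of volume at most V.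
    {Δ : AddSubgroup (Fin n → AddCircle (1 : ℝ)) |
      ∃ (b : Fin k → (Fin n → ℤ)) (H : AddSubgroup (Fin n → AddCircle (1 : ℝ))),
        LinearIndependent ℤ b ∧
        (∀ (x : Fin n → ℤ) (m : ℤ), m ≠ 0 →
          m • x ∈ Submodule.span ℤ (Set.range b) → x ∈ Submodule.span ℤ (Set.range b)) ∧
        ∃ hH : (H : Set (Fin n → AddCircle (1 : ℝ))).Finite,
          (Δ : Set (Fin n → AddCircle (1 : ℝ)))
              = {x | ∃ a ∈ subtorusSet b, ∃ h ∈ H, x = a + h} ∧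
          subtorusSet b ∩ (H : Set (Fin n → AddCircle (1 : ℝ))) = {0} ∧
          latticeCovol b * hH.toFinset.card ≤ V}.Finite :=
  finitely_many_small_subgroups_general n k V
end
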